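/- Let μ_A, μ_B, μ_C be the measures on ℝ with respective densities (with respect to Lebesgue measure): for A, (12/5) on (0,1/6) ∪ (1/2,2/3) and (3/10) on the rest of [0,1]; for B, (12/5) on (1/6,1/3) ∪ (2/3,5/6) and (3/10) on the rest of [0,1]; for C, (12/5) on (1/3,1/2) ∪ (5/6,1) and (3/10) on the rest of [0,1]. Let S_A = (0,1/6) ∪ (1/2,2/3), S_B = (1/6,1/3) ∪ (2/3,5/6), S_C = (1/3,1/2) ∪ (5/6,1). Then S_A, S_B, S_C are pairwise disjoint, their union equals [0,1] up to a Lebesgue-null set, and μ_A(S_A) = μ_B(S_B) = μ_C(S_C) = 4/5 > 9/20. Hence the allocation (S_A, S_B, S_C) is strictly better for every player than the contiguous Equitability Procedure allocation, which gives each player exactly 9/20. -/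

import Mathlib

/-!
Each player's own piece is two intervals of total length `1/3` on which his density is `12/5`,
so he values it at `12/5 · 1/3 = 4/5`, well above the `9/20` of the Equitability Procedure.
The three pieces tile `[0,1]` up to the seven breakpoints `0, 1/6, …, 1`.
-/

open MeasureTheory Set

/-- The pieces of cake favored by players A, B, C respectively. -/
def SA : Set ℝ := Ioo 0 (1/6) ∪ Ioo (1/2) (2/3)
def SB : Set ℝ := Ioo (1/6) (1/3) ∪ Ioo (2/3) (5/6)
def SC : Set ℝ := Ioo (1/3) (1/2) ∪ Ioo (5/6) 1

/-- Player A's value measure: density 2.4 on `S_A`, 0.3 on the rest of `[0,1]`. -/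
noncomputable def muA : Measure ℝ :=
  volume.withDensity (fun x =>
    (12/5 : ENNReal) * SA.indicator 1 x + (3/10 : ENNReal) * (Icc (0:ℝ) 1 \ SA).indicator 1 x)

/-- Player B's value measure: density 2.4 on `S_B`, 0.3 on the rest of `[0,1]`. -/
noncomputable def muB : Measure ℝ :=
  volume.withDensity (fun x =>
    (12/5 : ENNReal) * SB.indicator 1 x + (3/10 : ENNReal) * (Icc (0:ℝ) 1 \ SB).indicator 1 x)

/-- Player C's value measure: density 2.4 on `S_C`, 0.3 on the rest of `[0,1]`. -/
noncomputable def muC : Measure ℝ :=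
  volume.withDensity (fun x =>
    (12/5 : ENNReal) * SC.indicator 1 x + (3/10 : ENNReal) * (Icc (0:ℝ) 1 \ SC).indicator 1 x)

open scoped ENNReal

theorem Set.Icc_diff_subset_insert_Icc_diff {α : Type*} [LinearOrder α] {a b c : α}
    {U : Set α} (hU : Ioo a b ⊆ U) : Icc a c \ U ⊆ insert a (Icc b c \ U) := by
  rintro x ⟨⟨hax, hxc⟩, hxU⟩
  rcases hax.eq_or_lt with rfl | hax
  · exact mem_insert _ _
  · exact Or.inr ⟨⟨not_lt.1 fun hxb => hxU (hU ⟨hax, hxb⟩), hxc⟩, hxU⟩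

theorem MeasureTheory.measure_Icc_diff_null_of_Ioo_subset {α : Type*} [LinearOrder α]
    [MeasurableSpace α] {μ : Measure α} [NullSingletonClass μ] {a b c : α} {U : Set α}
    (hU : Ioo a b ⊆ U) (h : μ (Icc b c \ U) = 0) : μ (Icc a c \ U) = 0 :=
  measure_mono_null (Icc_diff_subset_insert_Icc_diff hU)
    ((measure_congr (insert_ae_eq_self a _)).trans h)

theorem MeasureTheory.withDensity_indicator_add_indicator_apply_self {α : Type*}
    [MeasurableSpace α] (μ : Measure α) {S : Set α} (hS : MeasurableSet S) (T : Set α)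
    (a b : ℝ≥0∞) :
    μ.withDensity (fun x => a * S.indicator 1 x + b * (T \ S).indicator 1 x) S = a * μ S := by
  rw [withDensity_apply _ hS, setLIntegral_congr_fun hS (g := fun _ => a), setLIntegral_const]
  intro x hx
  simp [hx]

theorem Real.volume_Ioo_union_Ioo {a b c d : ℝ} (hab : a ≤ b) (hbc : b ≤ c) (hcd : c ≤ d) :
    volume (Ioo a b ∪ Ioo c d) = ENNReal.ofReal (b - a + (d - c)) := by
  have hdisj : Disjoint (Ioo a b) (Ioo c d) :=
    Ioo_disjoint_Ioo.2 ((min_le_left b d).trans (hbc.trans (le_max_right a c)))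
  rw [measure_union hdisj measurableSet_Ioo, Real.volume_Ioo, Real.volume_Ioo,
    ENNReal.ofReal_add (sub_nonneg.2 hab) (sub_nonneg.2 hcd)]

theorem withDensity_own_piece_apply {S : Set ℝ} (hS : MeasurableSet S)
    (hvol : volume S = ENNReal.ofReal (1/3)) :
    volume.withDensity (fun x =>
      (12/5 : ℝ≥0∞) * S.indicator 1 x + (3/10 : ℝ≥0∞) * (Icc (0:ℝ) 1 \ S).indicator 1 x) S
      = 4/5 := by
  rw [withDensity_indicator_add_indicator_apply_self _ hS, hvol,
    ← ENNReal.toReal_eq_toReal_iff' (by finiteness) (by finiteness)]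
  norm_num

theorem volume_SA : volume SA = ENNReal.ofReal (1/3) := by
  rw [SA, Real.volume_Ioo_union_Ioo] <;> norm_num

theorem volume_SB : volume SB = ENNReal.ofReal (1/3) := by
  rw [SB, Real.volume_Ioo_union_Ioo] <;> norm_num

theorem volume_SC : volume SC = ENNReal.ofReal (1/3) := by
  rw [SC, Real.volume_Ioo_union_Ioo] <;> norm_num

theorem union_pieces_subset_Icc : SA ∪ SB ∪ SC ⊆ Icc (0:ℝ) 1 := by
  simp only [SA, SB, SC, union_subset_iff]
  refine ⟨⟨⟨?_, ?_⟩, ?_, ?_⟩, ?_, ?_⟩ <;>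
    exact Ioo_subset_Icc_self.trans (Icc_subset_Icc (by norm_num) (by norm_num))

theorem volume_Icc_diff_union_pieces : volume (Icc (0:ℝ) 1 \ (SA ∪ SB ∪ SC)) = 0 := by
  have hcover : ∀ {a b : ℝ}, Ioo a b ⊆ SA ∨ Ioo a b ⊆ SB ∨ Ioo a b ⊆ SC →
      Ioo a b ⊆ SA ∪ SB ∪ SC := by
    rintro a b (h | h | h)
    exacts [h.trans (subset_union_left.trans subset_union_left),
      h.trans (subset_union_right.trans subset_union_left), h.trans subset_union_right]
  refine measure_Icc_diff_null_of_Ioo_subset (b := 1/6) (hcover (by simp [SA])) <|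
    measure_Icc_diff_null_of_Ioo_subset (b := 1/3) (hcover (by simp [SB])) <|
    measure_Icc_diff_null_of_Ioo_subset (b := 1/2) (hcover (by simp [SC])) <|
    measure_Icc_diff_null_of_Ioo_subset (b := 2/3) (hcover (by simp [SA])) <|
    measure_Icc_diff_null_of_Ioo_subset (b := 5/6) (hcover (by simp [SB])) <|
    measure_Icc_diff_null_of_Ioo_subset (b := 1) (hcover (by simp [SC])) ?_
  rw [Icc_self]
  exact measure_mono_null sdiff_subset (measure_singleton 1)

/-- `S_A`, `S_B`, `S_C` are pairwise disjoint, their union is `[0,1]` up to a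
Lebesgue-null set, and each player values his own piece at `4/5 > 9/20`: the allocation
`(S_A, S_B, S_C)` strictly Pareto dominates the Equitability Procedure allocation. -/
theorem ep_not_pareto_optimal :
    Disjoint SA SB ∧ Disjoint SA SC ∧ Disjoint SB SC ∧
    SA ∪ SB ∪ SC ⊆ Icc (0:ℝ) 1 ∧
    volume (Icc (0:ℝ) 1 \ (SA ∪ SB ∪ SC)) = 0 ∧
    muA SA = 4/5 ∧ muB SB = 4/5 ∧ muC SC = 4/5 ∧
    (9/20 : ENNReal) < 4/5 := by
  refine ⟨?_, ?_, ?_, union_pieces_subset_Icc, volume_Icc_diff_union_pieces,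
    withDensity_own_piece_apply (measurableSet_Ioo.union measurableSet_Ioo) volume_SA,
    withDensity_own_piece_apply (measurableSet_Ioo.union measurableSet_Ioo) volume_SB,
    withDensity_own_piece_apply (measurableSet_Ioo.union measurableSet_Ioo) volume_SC, ?_⟩
  · simp only [SA, SB, disjoint_union_left, disjoint_union_right, Ioo_disjoint_Ioo]
    norm_num
  · simp only [SA, SC, disjoint_union_left, disjoint_union_right, Ioo_disjoint_Ioo]
    norm_num
  · simp only [SB, SC, disjoint_union_left, disjoint_union_right, Ioo_disjoint_Ioo]
    norm_num
  · rw [← ENNReal.toReal_lt_toReal (by finiteness) (by finiteness)]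
    norm_num
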